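/- arXiv:2202.11572 — 2 statements merged into one kernel-verified Lean document; each statement's English description precedes it below -/
import Mathlib

section
/- In a sponsored search auction with k slots of values α₁ > α₂ > ... > α_k > 0, where the agent with the j-th highest bid receives slot j and pays according to the quasi-linear utility θ_i(b_i) = ζ_i·α_i − Σ_{j=i}^{k} b_{j+1}(α_j − α_{j+1}) (with b_{k+1} = 0), truthful bidding b_i = ζ_i is a dominant strategy for every agent: for any profile of other agents' bids, the utility of agent i when bidding ζ_i is at least its utility under any other bid. -/
open Finset

attribute [local instance] Classical.propDecidable

/-- Rank of agent `i` under bid profile `b`: the number of agents ranked strictly before `i`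
(strictly higher bid, ties broken by index), so rank `p` means `i` holds the `(p+1)`-th
highest bid. -/
noncomputable def rank {n : ℕ} (b : Fin n → ℝ) (i : Fin n) : ℕ :=
  (Finset.univ.filter (fun j => b j > b i ∨ (b j = b i ∧ j < i))).card

/-- The bid of the agent ranked `p`-th (0-indexed), or `0` if there is no such agent
(in particular `sortedBid b n = 0`, playing the role of `b_{k+1} = 0`). -/
noncomputable def sortedBid {n : ℕ} (b : Fin n → ℝ) (p : ℕ) : ℝ :=
  if h : ∃ j : Fin n, rank b j = p then b h.choose else 0

/-- Slot values padded with zeros: slots `0, …, k-1` carry the value `α`, and `slotVal k α k = 0`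
plays the role of `α_{k+1} = 0`. -/
noncomputable def slotVal (k : ℕ) (α : ℕ → ℝ) (p : ℕ) : ℝ :=
  if p < k then α p else 0

/-- Quasi-linear SSA utility of agent `i` with true valuation `ζi` under bid profile `b`:
if `i` gets a slot (rank `< k`) it receives `ζ_i ⬝ α_{rank}` minus the payment
`∑_{j = rank}^{k-1} b_{(j+1)} (α_j − α_{j+1})`; agents without a slot get `0`. -/
noncomputable def ssaUtility {n : ℕ} (k : ℕ) (α : ℕ → ℝ) (ζi : ℝ) (b : Fin n → ℝ)
    (i : Fin n) : ℝ :=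
  if rank b i < k then
    ζi * slotVal k α (rank b i)
      - ∑ j ∈ Finset.Ico (rank b i) k,
          sortedBid b (j + 1) * (slotVal k α j - slotVal k α (j + 1))
  else 0


section Aux

variable {n : ℕ}

/-- The strict priority order: `j` is ranked strictly before `m`. -/
def Prec (b : Fin n → ℝ) (j m : Fin n) : Prop :=
  b j > b m ∨ (b j = b m ∧ j < m)

lemma Prec.irrefl (b : Fin n → ℝ) (j : Fin n) : ¬ Prec b j j := by
  simp [Prec]

lemma Prec.trans' {b : Fin n → ℝ} {j m l : Fin n}
    (h1 : Prec b j m) (h2 : Prec b m l) : Prec b j l := by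
  rcases h1 with h1 | ⟨h1, h1'⟩ <;> rcases h2 with h2 | ⟨h2, h2'⟩
  · exact Or.inl (lt_trans h2 h1)
  · exact Or.inl (h2 ▸ h1)
  · exact Or.inl (lt_of_lt_of_le h2 (le_of_eq h1.symm))
  · exact Or.inr ⟨h1.trans h2, h1'.trans h2'⟩

lemma Prec.total {b : Fin n → ℝ} {j m : Fin n} (h : j ≠ m) :
    Prec b j m ∨ Prec b m j := by
  rcases lt_trichotomy (b j) (b m) with hb | hb | hb
  · exact Or.inr (Or.inl hb)
  · rcases lt_or_gt_of_ne h with hj | hj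
    · exact Or.inl (Or.inr ⟨hb, hj⟩)
    · exact Or.inr (Or.inr ⟨hb.symm, hj⟩)
  · exact Or.inl (Or.inl hb)

lemma Prec.ne {b : Fin n → ℝ} {j m : Fin n} (h : Prec b j m) : j ≠ m := by
  rintro rfl; exact Prec.irrefl b j h

lemma rank_eq_card (b : Fin n → ℝ) (i : Fin n) :
    rank b i = (Finset.univ.filter (fun j => Prec b j i)).card := by
  unfold rank Prec
  congr

lemma rank_lt_of_prec {b : Fin n → ℝ} {l m : Fin n} (h : Prec b l m) :
    rank b l < rank b m := by
  rw [rank_eq_card, rank_eq_card]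
  apply Finset.card_lt_card
  rw [Finset.ssubset_iff_of_subset]
  · exact ⟨l, by simp [h], by simp [Prec.irrefl]⟩
  · intro j hj
    simp only [Finset.mem_filter, Finset.mem_univ, true_and] at hj ⊢
    exact hj.trans' h

lemma rank_inj {b : Fin n → ℝ} {l m : Fin n} (h : rank b l = rank b m) : l = m := by
  by_contra hne
  rcases Prec.total hne with hp | hp
  · exact absurd h (Nat.ne_of_lt (rank_lt_of_prec hp))
  · exact absurd h.symm (Nat.ne_of_lt (rank_lt_of_prec hp))

lemma sortedBid_eq {b : Fin n → ℝ} {l : Fin n} {q : ℕ} (h : rank b l = q) :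
    sortedBid b q = b l := by
  have hex : ∃ j : Fin n, rank b j = q := ⟨l, h⟩
  rw [sortedBid, dif_pos hex]
  have : hex.choose = l := rank_inj (hex.choose_spec.trans h.symm)
  rw [this]

/-- Rank of `l` among the agents other than `i`. -/
noncomputable def rankO (b : Fin n → ℝ) (i l : Fin n) : ℕ :=
  (Finset.univ.filter (fun m => m ≠ i ∧ Prec b m l)).card

/-- The bid of the agent ranked `q`-th among the agents other than `i`. -/
noncomputable def othersBid (b : Fin n → ℝ) (i : Fin n) (q : ℕ) : ℝ :=
  if h : ∃ l : Fin n, l ≠ i ∧ rankO b i l = q then b h.choose else 0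

lemma rankO_lt_of_prec {b : Fin n → ℝ} {i l m : Fin n} (hl : l ≠ i) (hm : m ≠ i)
    (h : Prec b l m) : rankO b i l < rankO b i m := by
  apply Finset.card_lt_card
  rw [Finset.ssubset_iff_of_subset]
  · refine ⟨l, by simp [hl, h], by simp [Prec.irrefl]⟩
  · intro j hj
    simp only [Finset.mem_filter, Finset.mem_univ, true_and] at hj ⊢
    exact ⟨hj.1, hj.2.trans' h⟩

lemma rankO_inj {b : Fin n → ℝ} {i l m : Fin n} (hl : l ≠ i) (hm : m ≠ i)
    (h : rankO b i l = rankO b i m) : l = m := by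
  by_contra hne
  rcases Prec.total hne with hp | hp
  · exact absurd h (Nat.ne_of_lt (rankO_lt_of_prec hl hm hp))
  · exact absurd h.symm (Nat.ne_of_lt (rankO_lt_of_prec hm hl hp))

lemma othersBid_eq {b : Fin n → ℝ} {i l : Fin n} {q : ℕ} (hl : l ≠ i)
    (h : rankO b i l = q) : othersBid b i q = b l := by
  have hex : ∃ l : Fin n, l ≠ i ∧ rankO b i l = q := ⟨l, hl, h⟩
  rw [othersBid, dif_pos hex]
  have := hex.choose_spec
  have : hex.choose = l := rankO_inj this.1 hl (this.2.trans h.symm)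
  rw [this]

lemma rankO_update {b : Fin n → ℝ} {i l : Fin n} (t : ℝ) (hl : l ≠ i) :
    rankO (Function.update b i t) i l = rankO b i l := by
  unfold rankO
  congr 1
  apply Finset.filter_congr
  intro m _
  by_cases hm : m = i
  · simp [hm]
  · simp only [hm, ne_eq, not_false_eq_true, true_and]
    unfold Prec
    rw [Function.update_of_ne hm, Function.update_of_ne hl]

lemma othersBid_update (b : Fin n → ℝ) (i : Fin n) (t : ℝ) (q : ℕ) :
    othersBid (Function.update b i t) i q = othersBid b i q := by
  by_cases hex : ∃ l : Fin n, l ≠ i ∧ rankO b i l = q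
  · obtain ⟨l, hl, hr⟩ := hex
    rw [othersBid_eq hl hr, othersBid_eq hl ((rankO_update t hl).trans hr),
      Function.update_of_ne hl]
  · have hex' : ¬ ∃ l : Fin n, l ≠ i ∧ rankO (Function.update b i t) i l = q := by
      rintro ⟨l, hl, hr⟩
      exact hex ⟨l, hl, (rankO_update t hl).symm.trans hr⟩
    rw [othersBid, dif_neg hex', othersBid, dif_neg hex]

lemma rankO_lt_rank_of_prec {b : Fin n → ℝ} {i l : Fin n} (h : Prec b l i) :
    rankO b i l < rank b i := by
  rw [rank_eq_card]
  apply Finset.card_lt_card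
  rw [Finset.ssubset_iff_of_subset]
  · exact ⟨l, by simp [h], by simp [Prec.irrefl]⟩
  · intro j hj
    simp only [Finset.mem_filter, Finset.mem_univ, true_and] at hj ⊢
    exact hj.2.trans' h

lemma rank_le_rankO_of_prec {b : Fin n → ℝ} {i l : Fin n} (h : Prec b i l) :
    rank b i ≤ rankO b i l := by
  rw [rank_eq_card]
  apply Finset.card_le_card
  intro m hm
  simp only [Finset.mem_filter, Finset.mem_univ, true_and] at hm ⊢
  exact ⟨Prec.ne hm, Prec.trans' hm h⟩

lemma rank_of_rankO_ge {b : Fin n → ℝ} {i l : Fin n} (hl : l ≠ i)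
    (h : rank b i ≤ rankO b i l) : rank b l = rankO b i l + 1 := by
  have hprec : Prec b i l := by
    rcases Prec.total (Ne.symm hl) with hp | hp
    · exact hp
    · exact absurd h (not_le_of_gt (rankO_lt_rank_of_prec hp))
  rw [rank_eq_card]
  have hset : Finset.univ.filter (fun m => Prec b m l)
      = insert i (Finset.univ.filter (fun m => m ≠ i ∧ Prec b m l)) := by
    ext m
    simp only [Finset.mem_filter, Finset.mem_univ, true_and, Finset.mem_insert]
    constructor
    · intro hm
      by_cases hmi : m = i
      · exact Or.inl hmi
      · exact Or.inr ⟨hmi, hm⟩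
    · rintro (rfl | ⟨_, hm⟩)
      · exact hprec
      · exact hm
  rw [hset, Finset.card_insert_of_notMem (by simp), rankO]

lemma rank_of_rankO_lt {b : Fin n → ℝ} {i l : Fin n} (hl : l ≠ i)
    (h : rankO b i l < rank b i) : rank b l = rankO b i l := by
  have hprec : Prec b l i := by
    rcases Prec.total hl with hp | hp
    · exact hp
    · exact absurd (rank_le_rankO_of_prec hp) (not_le_of_gt h)
  rw [rank_eq_card]
  congr 1
  ext m
  simp only [Finset.mem_filter, Finset.mem_univ, true_and]
  constructor
  · intro hm
    refine ⟨?_, hm⟩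
    rintro rfl
    exact absurd (rank_le_rankO_of_prec hm) (not_le_of_gt h)
  · intro hm
    exact hm.2

lemma sortedBid_eq_othersBid {b : Fin n → ℝ} {i : Fin n} {q : ℕ}
    (hq : rank b i ≤ q) : sortedBid b (q + 1) = othersBid b i q := by
  by_cases hex : ∃ l : Fin n, l ≠ i ∧ rankO b i l = q
  · obtain ⟨l, hl, hr⟩ := hex
    have : rank b l = q + 1 := by
      rw [rank_of_rankO_ge hl (hr ▸ hq), hr]
    rw [sortedBid_eq this, othersBid_eq hl hr]
  · have hex' : ¬ ∃ m : Fin n, rank b m = q + 1 := by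
      rintro ⟨m, hm⟩
      have hmi : m ≠ i := by
        rintro rfl; omega
      by_cases hc : rank b i ≤ rankO b i m
      · have := rank_of_rankO_ge hmi hc
        exact hex ⟨m, hmi, by omega⟩
      · have := rank_of_rankO_lt hmi (lt_of_not_ge hc)
        omega
    rw [sortedBid, dif_neg hex', othersBid, dif_neg hex]

lemma othersBid_le_self {b : Fin n → ℝ} {i : Fin n} (h0 : 0 ≤ b i) {q : ℕ}
    (hq : rank b i ≤ q) : othersBid b i q ≤ b i := by
  by_cases hex : ∃ l : Fin n, l ≠ i ∧ rankO b i l = q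
  · obtain ⟨l, hl, hr⟩ := hex
    rw [othersBid_eq hl hr]
    by_contra hlt
    have hprec : Prec b l i := Or.inl (lt_of_not_ge hlt)
    have := rankO_lt_rank_of_prec hprec
    omega
  · rw [othersBid, dif_neg hex]
    exact h0

lemma self_le_othersBid {b : Fin n → ℝ} {i : Fin n} {q : ℕ}
    (hq : q < rank b i) : b i ≤ othersBid b i q := by
  classical
  set T := Finset.univ.filter (fun l => Prec b l i) with hT
  have hcard : T.card = rank b i := (rank_eq_card b i).symm
  have hinj : Set.InjOn (rankO b i) ↑T := by
    intro l hl m hm h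
    simp only [hT, Finset.coe_filter, Set.mem_setOf_eq, Finset.mem_univ, true_and] at hl hm
    exact rankO_inj hl.ne hm.ne h
  have hsub : T.image (rankO b i) ⊆ Finset.range (rank b i) := by
    intro q hq
    obtain ⟨l, hl, rfl⟩ := Finset.mem_image.mp hq
    simp only [hT, Finset.mem_filter, Finset.mem_univ, true_and] at hl
    exact Finset.mem_range.mpr (rankO_lt_rank_of_prec hl)
  have himg : T.image (rankO b i) = Finset.range (rank b i) := by
    apply Finset.eq_of_subset_of_card_le hsub
    rw [Finset.card_range, Finset.card_image_of_injOn hinj, hcard]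
  have hqmem : q ∈ T.image (rankO b i) := by
    rw [himg]; exact Finset.mem_range.mpr hq
  obtain ⟨l, hl, hr⟩ := Finset.mem_image.mp hqmem
  simp only [hT, Finset.mem_filter, Finset.mem_univ, true_and] at hl
  rw [othersBid_eq hl.ne hr]
  rcases hl with h | ⟨h, _⟩
  · exact le_of_lt h
  · exact le_of_eq h.symm

lemma slotVal_diff_nonneg {k : ℕ} {α : ℕ → ℝ}
    (hαpos : ∀ p, p < k → 0 < α p)
    (hαdec : ∀ p q, p < q → q < k → α q < α p) (q : ℕ) :
    0 ≤ slotVal k α q - slotVal k α (q + 1) := by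
  unfold slotVal
  split_ifs with h1 h2 h2
  · have := hαdec q (q + 1) (Nat.lt_succ_self q) h2
    linarith
  · have := hαpos q h1
    linarith
  · omega
  · simp

lemma sum_telescope_Ico (f : ℕ → ℝ) {p k : ℕ} (h : p ≤ k) :
    ∑ j ∈ Finset.Ico p k, (f j - f (j + 1)) = f p - f k := by
  induction k, h using Nat.le_induction with
  | base => simp
  | succ k hk ih => rw [Finset.sum_Ico_succ_top hk, ih]; ring

lemma ssaUtility_eq {k : ℕ} (α : ℕ → ℝ) (ζi : ℝ) (b : Fin n → ℝ) (i : Fin n) :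
    ssaUtility k α ζi b i
      = ∑ j ∈ Finset.Ico (rank b i) k,
          (ζi - othersBid b i j) * (slotVal k α j - slotVal k α (j + 1)) := by
  unfold ssaUtility
  by_cases h : rank b i < k
  · rw [if_pos h]
    have hsort : ∀ j ∈ Finset.Ico (rank b i) k,
        sortedBid b (j + 1) * (slotVal k α j - slotVal k α (j + 1))
          = othersBid b i j * (slotVal k α j - slotVal k α (j + 1)) := by
      intro j hj
      rw [sortedBid_eq_othersBid (Finset.mem_Ico.mp hj).1]
    rw [Finset.sum_congr rfl hsort]
    have htel : ∑ j ∈ Finset.Ico (rank b i) k, (slotVal k α j - slotVal k α (j + 1))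
        = slotVal k α (rank b i) - slotVal k α k :=
      sum_telescope_Ico (fun q => slotVal k α q) (le_of_lt h)
    have hk0 : slotVal k α k = 0 := by simp [slotVal]
    have hexp : ∑ j ∈ Finset.Ico (rank b i) k,
        (ζi - othersBid b i j) * (slotVal k α j - slotVal k α (j + 1))
        = ζi * (∑ j ∈ Finset.Ico (rank b i) k, (slotVal k α j - slotVal k α (j + 1)))
          - ∑ j ∈ Finset.Ico (rank b i) k,
              othersBid b i j * (slotVal k α j - slotVal k α (j + 1)) := by
      rw [Finset.mul_sum, ← Finset.sum_sub_distrib]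
      exact Finset.sum_congr rfl (fun j _ => by ring)
    rw [hexp, htel, hk0]
    ring
  · rw [if_neg h, Finset.Ico_eq_empty h, Finset.sum_empty]

end Aux

/-- **Truthful bidding is a dominant strategy in a sponsored search auction.**
For strictly decreasing positive slot values `α₁ > ⋯ > α_k > 0` and any profile of the other
agents' (nonnegative) bids, agent `i`'s utility when bidding its true valuation `ζ i` is at
least its utility under any other bid. -/
theorem ssa_truthful_dominant {n k : ℕ} (hk : k ≤ n) (α : ℕ → ℝ)
    (hαpos : ∀ p, p < k → 0 < α p)
    (hαdec : ∀ p q, p < q → q < k → α q < α p)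
    (ζ : Fin n → ℝ) (hζ : ∀ i, 0 ≤ ζ i)
    (i : Fin n) (b : Fin n → ℝ) (hb : ∀ j, 0 ≤ b j) :
    ssaUtility k α (ζ i) b i ≤ ssaUtility k α (ζ i) (Function.update b i (ζ i)) i := by
  classical
  set b' := Function.update b i (ζ i) with hb'def
  have hbi' : b' i = ζ i := Function.update_self i (ζ i) b
  set p := rank b i with hp
  set p' := rank b' i with hp'
  set c : ℕ → ℝ := othersBid b' i with hc
  set Δ : ℕ → ℝ := fun j => slotVal k α j - slotVal k α (j + 1) with hΔ
  have hΔnn : ∀ j, 0 ≤ Δ j := fun j => slotVal_diff_nonneg hαpos hαdec j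
  have hub : ssaUtility k α (ζ i) b i = ∑ j ∈ Finset.Ico p k, (ζ i - c j) * Δ j := by
    rw [ssaUtility_eq]
    refine Finset.sum_congr rfl fun j _ => ?_
    rw [hc, hb'def, othersBid_update]
  have hub' : ssaUtility k α (ζ i) b' i = ∑ j ∈ Finset.Ico p' k, (ζ i - c j) * Δ j :=
    ssaUtility_eq α (ζ i) b' i
  have hlow : ∀ j, j < p' → ζ i ≤ c j := by
    intro j hj
    have := self_le_othersBid (b := b') (i := i) (q := j) hj
    rwa [hbi'] at this
  have hhigh : ∀ j, p' ≤ j → c j ≤ ζ i := by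
    intro j hj
    have := othersBid_le_self (b := b') (i := i) (hbi' ▸ hζ i) (q := j) hj
    rwa [hbi'] at this
  rw [hub, hub']
  rcases le_total p' p with hpp | hpp
  · have hsub : Finset.Ico p k ⊆ Finset.Ico p' k := Finset.Ico_subset_Ico hpp le_rfl
    have hsd := Finset.sum_sdiff (f := fun j => (ζ i - c j) * Δ j) hsub
    have hnn : 0 ≤ ∑ j ∈ Finset.Ico p' k \ Finset.Ico p k, (ζ i - c j) * Δ j := by
      apply Finset.sum_nonneg
      intro j hj
      have hj1 : p' ≤ j := (Finset.mem_Ico.mp (Finset.mem_sdiff.mp hj).1).1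
      have := hhigh j hj1
      exact mul_nonneg (by linarith) (hΔnn j)
    linarith
  · have hsub : Finset.Ico p' k ⊆ Finset.Ico p k := Finset.Ico_subset_Ico hpp le_rfl
    have hsd := Finset.sum_sdiff (f := fun j => (ζ i - c j) * Δ j) hsub
    have hnp : ∑ j ∈ Finset.Ico p k \ Finset.Ico p' k, (ζ i - c j) * Δ j ≤ 0 := by
      apply Finset.sum_nonpos
      intro j hj
      have hmem := Finset.mem_sdiff.mp hj
      have hjk : j < k := (Finset.mem_Ico.mp hmem.1).2
      have hjp' : j < p' := by
        by_contra hcon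
        exact hmem.2 (Finset.mem_Ico.mpr ⟨le_of_not_gt hcon, hjk⟩)
      have := hlow j hjp'
      exact mul_nonpos_of_nonpos_of_nonneg (by linarith) (hΔnn j)
    linarith
end

section
/- (Overflow prevention) In a sponsored search auction with decreasing slot values α₁ > ... > α_k > 0 and agents bidding truthfully with valuations ζ₁ > ζ₂ > ... sorted decreasingly, suppose agent i holds position i and agent j = i + m (for some m ≥ 1) holds position i + m. If an amount q with 0 ≤ q < ζ_i·(1 − α_{i+m}/α_i) − Σ_{s=i}^{i+m-1} ζ_{s+1}·(α_s − α_{s+1})/α_i is transferred from agent i's valuation to agent j's valuation (ζ̂_i = ζ_i − q, ζ̂_j = ζ_j + q), then agent i's utility at position i+m under the new valuation ζ̂_i is still strictly less than agent i's utility at position i under ζ̂_i; i.e., agent i still strictly prefers its original earlier slot after the transfer. -/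
/-- **Overflow prevention.** In an SSA with truthful, strictly decreasing valuations
`ζ₁ > ⋯ > ζ_k` (1-indexed, `ζ_{k+1} = 0`) and strictly decreasing positive slot values
`α₁ > ⋯ > α_k > 0` (`α_{k+1} = 0`), if an amount `q` with
`0 ≤ q < ζ_i (1 − α_{i+m}/α_i) − ∑_{s=i}^{i+m-1} ζ_{s+1}(α_s − α_{s+1})/α_i`
is transferred away from agent `i`'s valuation, then under the new valuation `ζ_i − q`
agent `i`'s utility at position `i+m` is still strictly less than its utility at
position `i`: agent `i` still strictly prefers its original earlier slot. -/
theorem overflow_prevention (k : ℕ) (α ζ : ℕ → ℝ)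
    (hαdec : ∀ p q, 1 ≤ p → p < q → q ≤ k → α q < α p)
    (hαpos : ∀ p, 1 ≤ p → p ≤ k → 0 < α p)
    (hαend : α (k + 1) = 0)
    (hζdec : ∀ p q, 1 ≤ p → p < q → q ≤ k → ζ q < ζ p)
    (hζpos : ∀ p, 1 ≤ p → p ≤ k → 0 < ζ p)
    (hζend : ζ (k + 1) = 0)
    (i m : ℕ) (hi : 1 ≤ i) (hm : 1 ≤ m) (him : i + m ≤ k)
    (q : ℝ) (hq0 : 0 ≤ q)
    (hq : q < ζ i * (1 - α (i + m) / α i)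
        - ∑ s ∈ Finset.Ico i (i + m), ζ (s + 1) * (α s - α (s + 1)) / α i) :
    (ζ i - q) * α (i + m) - ∑ s ∈ Finset.Icc (i + m) k, ζ (s + 1) * (α s - α (s + 1))
      < (ζ i - q) * α i - ∑ s ∈ Finset.Icc i k, ζ (s + 1) * (α s - α (s + 1)) := by
  have hαi : 0 < α i := hαpos i hi (by omega)
  have hαim : 0 < α (i + m) := hαpos _ (by omega) him
  have hsplit : ∑ s ∈ Finset.Icc i k, ζ (s + 1) * (α s - α (s + 1))
      = (∑ s ∈ Finset.Ico i (i + m), ζ (s + 1) * (α s - α (s + 1)))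
      + ∑ s ∈ Finset.Icc (i + m) k, ζ (s + 1) * (α s - α (s + 1)) := by
    rw [← Finset.Ico_add_one_right_eq_Icc, ← Finset.Ico_add_one_right_eq_Icc,
      ← Finset.sum_Ico_consecutive _ (by omega : i ≤ i + m) (by omega : i + m ≤ k + 1)]
  have hq2 := mul_lt_mul_of_pos_right hq hαi
  have e1 : (ζ i * (1 - α (i + m) / α i)
        - ∑ s ∈ Finset.Ico i (i + m), ζ (s + 1) * (α s - α (s + 1)) / α i) * α i
      = ζ i * (α i - α (i + m))
        - ∑ s ∈ Finset.Ico i (i + m), ζ (s + 1) * (α s - α (s + 1)) := by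
    rw [sub_mul, ← Finset.sum_div, div_mul_cancel₀ _ hαi.ne']
    field_simp
  rw [e1] at hq2
  nlinarith [mul_nonneg hq0 hαim.le]
end
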